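/- arXiv:1803.00872 — 3 statements merged into one kernel-verified Lean document; each statement's English description precedes it below -/
import Mathlib

section
/- Let p ∈ ℝ³ and θ ∈ (1,3). Then there exists a constant C > 0, depending only on θ, such that ∫_{ℝ³} 1/(((p-q)² + 1) |q|^θ) dq ≤ C / |p|^{θ-1} for all p ≠ 0. -/
/-!
Drop the `+ 1` and bound the integral by the two-point Riesz integral
`∫ ‖p - q‖ ^ (-2) * ‖q‖ ^ (-θ) dq`, which is homogeneous of degree `3 - 2 - θ = 1 - θ` in `p`.
It therefore suffices to bound it uniformly for `‖p‖ = 1`. There the kernel is dominated by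
`‖q‖ ^ (-θ)` near `0`, by `‖p - q‖ ^ (-2)` near `p` and by `‖q‖ ^ (-θ - 2)` away from both;
these are integrable because `θ < 3`, `2 < 3` and `θ + 2 > 3`, and the integral of the majorant
does not depend on `p` by translation invariance.
-/

open MeasureTheory Metric Set Module

theorem half_rpow_neg (γ : ℝ) : (1 / 2 : ℝ) ^ (-γ) = 2 ^ γ := by
  rw [Real.rpow_neg (by norm_num), one_div, Real.inv_rpow (by norm_num), inv_inv]

section Kernel

variable {E : Type*} [NormedAddCommGroup E]

noncomputable def rieszKernel (α β : ℝ) (p q : E) : ℝ := ‖p - q‖ ^ (-β) * ‖q‖ ^ (-α)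

noncomputable def rieszMajorant (α β : ℝ) (e q : E) : ℝ :=
  2 ^ β * (ball (0 : E) (1 / 2)).indicator (fun x => ‖x‖ ^ (-α)) q
    + 3 ^ β * (ball (0 : E) (1 / 2))ᶜ.indicator (fun x => ‖x‖ ^ (-(α + β))) q
    + 2 ^ α * (ball (0 : E) (1 / 2)).indicator (fun x => ‖x‖ ^ (-β)) (e - q)

/-- Where `‖q‖ < 1/2` we have `‖e - q‖ ≥ 1/2`, where `‖e - q‖ < 1/2` we have `‖q‖ ≥ 1/2`, and
elsewhere `‖e - q‖ ≥ ‖q‖ / 3`. -/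
theorem rieszKernel_le_rieszMajorant {α β : ℝ} (hα : 0 ≤ α) (hβ : 0 ≤ β) {e : E}
    (he : ‖e‖ = 1) (q : E) : rieszKernel α β e q ≤ rieszMajorant α β e q := by
  have h₁ : 0 ≤ 2 ^ β * (ball (0 : E) (1 / 2)).indicator (fun x => ‖x‖ ^ (-α)) q :=
    mul_nonneg (by positivity) (indicator_nonneg (fun _ _ => by positivity) _)
  have h₂ : 0 ≤ 3 ^ β * (ball (0 : E) (1 / 2))ᶜ.indicator (fun x => ‖x‖ ^ (-(α + β))) q :=
    mul_nonneg (by positivity) (indicator_nonneg (fun _ _ => by positivity) _)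
  have h₃ : 0 ≤ 2 ^ α * (ball (0 : E) (1 / 2)).indicator (fun x => ‖x‖ ^ (-β)) (e - q) :=
    mul_nonneg (by positivity) (indicator_nonneg (fun _ _ => by positivity) _)
  have htri : ‖e‖ ≤ ‖e - q‖ + ‖q‖ := norm_le_norm_sub_add e q
  unfold rieszKernel rieszMajorant
  by_cases hq : ‖q‖ < 1 / 2
  · have hfar : ‖e - q‖ ^ (-β) ≤ 2 ^ β :=
      half_rpow_neg β ▸ Real.rpow_le_rpow_of_nonpos (by norm_num) (by linarith) (by linarith)
    rw [indicator_of_mem (mem_ball_zero_iff.2 hq)] at h₁ ⊢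
    nlinarith [Real.rpow_nonneg (norm_nonneg q) (-α)]
  by_cases hd : ‖e - q‖ < 1 / 2
  · have hfar : ‖q‖ ^ (-α) ≤ 2 ^ α :=
      half_rpow_neg α ▸ Real.rpow_le_rpow_of_nonpos (by norm_num) (by linarith) (by linarith)
    rw [indicator_of_mem (mem_ball_zero_iff.2 hd)] at h₃ ⊢
    nlinarith [Real.rpow_nonneg (norm_nonneg (e - q)) (-β)]
  have hq₀ : 0 < ‖q‖ := by linarith
  have hfar : ‖q‖ / 3 ≤ ‖e - q‖ := by
    have := norm_sub_norm_le q e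
    rw [norm_sub_rev] at this
    linarith
  have hsplit : (‖q‖ / 3) ^ (-β) * ‖q‖ ^ (-α) = 3 ^ β * ‖q‖ ^ (-(α + β)) := by
    rw [Real.div_rpow hq₀.le (by norm_num), Real.rpow_neg (by norm_num : (0 : ℝ) ≤ 3), neg_add',
      Real.rpow_sub hq₀, Real.rpow_neg hq₀.le, Real.rpow_neg hq₀.le]
    field_simp
  rw [indicator_of_mem (by simpa using hq : q ∈ (ball (0 : E) (1 / 2))ᶜ)] at h₂ ⊢
  calc ‖e - q‖ ^ (-β) * ‖q‖ ^ (-α) ≤ (‖q‖ / 3) ^ (-β) * ‖q‖ ^ (-α) := by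
        gcongr ?_ * _
        exact Real.rpow_le_rpow_of_nonpos (by positivity) hfar (by linarith)
    _ ≤ _ := by linarith

theorem rieszKernel_smul [NormedSpace ℝ E] {α β c : ℝ} (hc : 0 < c) (e q : E) :
    rieszKernel α β (c • e) q = c ^ (-(α + β)) * rieszKernel α β e (c⁻¹ • q) := by
  obtain ⟨q, rfl⟩ : ∃ q', q = c • q' := ⟨c⁻¹ • q, (smul_inv_smul₀ hc.ne' q).symm⟩
  simp only [rieszKernel, inv_smul_smul₀ hc.ne', ← smul_sub, norm_smul,
    Real.norm_of_nonneg hc.le, Real.mul_rpow hc.le (norm_nonneg _), neg_add, Real.rpow_add hc]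
  ring

end Kernel

section Integral

variable {E : Type*} [NormedAddCommGroup E] [NormedSpace ℝ E] [FiniteDimensional ℝ E]
  [MeasurableSpace E] [BorelSpace E] (μ : Measure E) [μ.IsAddHaarMeasure]

theorem integrable_rieszKernel_smul {α β c : ℝ} (hc : 0 < c) {e : E}
    (h : Integrable (rieszKernel α β e) μ) : Integrable (rieszKernel α β (c • e)) μ := by
  simp_rw [funext (rieszKernel_smul (α := α) (β := β) hc e)]
  exact (h.comp_smul (inv_ne_zero hc.ne')).const_mul _

theorem integral_rieszKernel_smul {α β c : ℝ} (hc : 0 < c) (e : E) :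
    ∫ q, rieszKernel α β (c • e) q ∂μ
      = c ^ ((finrank ℝ E : ℝ) - α - β) * ∫ q, rieszKernel α β e q ∂μ := by
  simp_rw [rieszKernel_smul hc, integral_const_mul,
    Measure.integral_comp_inv_smul_of_nonneg μ _ hc.le, smul_eq_mul, ← mul_assoc,
    ← Real.rpow_natCast, ← Real.rpow_add hc]
  ring_nf

variable [Nontrivial E]

theorem integrable_indicator_ball_norm_rpow_neg {α : ℝ} (hα : α < finrank ℝ E) (r : ℝ) :
    Integrable ((ball (0 : E) r).indicator fun x => ‖x‖ ^ (-α)) μ :=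
  (integrable_indicator_iff measurableSet_ball).2 <|
    integrableOn_ball_of_norm_le_rpow finrank_pos (C := 1) hα
      (.of_forall fun x => by simp [abs_of_nonneg (Real.rpow_nonneg (norm_nonneg x) _)])
      (measurable_norm.pow_const _).aestronglyMeasurable

theorem integrable_indicator_compl_ball_norm_rpow_neg {α : ℝ} (hα : finrank ℝ E < α) {r : ℝ}
    (hr : 0 < r) : Integrable ((ball (0 : E) r)ᶜ.indicator fun x => ‖x‖ ^ (-α)) μ := by
  have hradial : (ball (0 : E) r)ᶜ.indicator (fun x => ‖x‖ ^ (-α))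
      = fun x => (Ici r).indicator (fun y : ℝ => y ^ (-α)) ‖x‖ := by
    ext x
    by_cases hx : r ≤ ‖x‖ <;> simp [indicator, hx]
  rw [hradial, integrable_fun_norm_addHaar, ← indicator_smul,
    integrableOn_iff_integrable_of_support_subset, integrable_indicator_iff measurableSet_Ici,
    integrableOn_Ici_iff_integrableOn_Ioi]
  · refine (integrableOn_Ioi_rpow_of_lt (a := (finrank ℝ E : ℝ) - 1 - α) (by linarith)
      hr).congr_fun (fun y (hy : r < y) => ?_) measurableSet_Ioi
    rw [smul_eq_mul, ← Real.rpow_natCast, Nat.cast_sub finrank_pos, ← Real.rpow_add (hr.trans hy)]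
    ring_nf
  · exact support_indicator_subset.trans fun y (hy : r ≤ y) => hr.trans_le hy

theorem integrable_rieszMajorant {α β : ℝ} (hα : α < finrank ℝ E) (hβ : β < finrank ℝ E)
    (hαβ : finrank ℝ E < α + β) (e : E) : Integrable (rieszMajorant α β e) μ :=
  (((integrable_indicator_ball_norm_rpow_neg μ hα _).const_mul _).add
    ((integrable_indicator_compl_ball_norm_rpow_neg μ hαβ one_half_pos).const_mul _)).add
    (((integrable_indicator_ball_norm_rpow_neg μ hβ _).comp_sub_left e).const_mul _)

theorem integral_rieszMajorant_eq {α β : ℝ} (hα : α < finrank ℝ E) (hβ : β < finrank ℝ E)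
    (hαβ : finrank ℝ E < α + β) (e : E) :
    ∫ q, rieszMajorant α β e q ∂μ = ∫ q, rieszMajorant α β 0 q ∂μ := by
  have hg := ((integrable_indicator_ball_norm_rpow_neg μ hα (1 / 2)).const_mul (2 ^ β)).fun_add
    ((integrable_indicator_compl_ball_norm_rpow_neg μ hαβ one_half_pos).const_mul (3 ^ β))
  have hh := (integrable_indicator_ball_norm_rpow_neg μ hβ (1 / 2)).const_mul (2 ^ α)
  simp only [rieszMajorant]
  rw [integral_add hg (hh.comp_sub_left e), integral_add hg (hh.comp_sub_left 0),
    integral_sub_left_eq_self (fun x => 2 ^ α * (ball (0 : E) (1 / 2)).indicator _ x),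
    integral_sub_left_eq_self (fun x => 2 ^ α * (ball (0 : E) (1 / 2)).indicator _ x)]

theorem exists_integral_rieszKernel_le {α β : ℝ} (hα₀ : 0 ≤ α) (hβ₀ : 0 ≤ β)
    (hα : α < finrank ℝ E) (hβ : β < finrank ℝ E) (hαβ : finrank ℝ E < α + β) :
    ∃ C, ∀ p : E, p ≠ 0 → Integrable (rieszKernel α β p) μ ∧
      ∫ q, rieszKernel α β p q ∂μ ≤ C * ‖p‖ ^ ((finrank ℝ E : ℝ) - α - β) := by
  refine ⟨∫ q, rieszMajorant α β 0 q ∂μ, fun p hp => ?_⟩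
  have hp₀ : 0 < ‖p‖ := norm_pos_iff.2 hp
  set e := ‖p‖⁻¹ • p
  have he : ‖e‖ = 1 := norm_smul_inv_norm hp
  have hpe : p = ‖p‖ • e := (smul_inv_smul₀ hp₀.ne' p).symm
  have hmeas : AEStronglyMeasurable (rieszKernel α β e) μ := by
    unfold rieszKernel
    fun_prop
  have hint : Integrable (rieszKernel α β e) μ :=
    (integrable_rieszMajorant μ hα hβ hαβ e).mono' hmeas (.of_forall fun q => by
      rw [Real.norm_of_nonneg (by unfold rieszKernel; positivity)]
      exact rieszKernel_le_rieszMajorant hα₀ hβ₀ he q)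
  have hle : ∫ q, rieszKernel α β e q ∂μ ≤ ∫ q, rieszMajorant α β 0 q ∂μ :=
    integral_rieszMajorant_eq μ hα hβ hαβ e ▸ integral_mono hint
      (integrable_rieszMajorant μ hα hβ hαβ e) (rieszKernel_le_rieszMajorant hα₀ hβ₀ he)
  rw [hpe]
  refine ⟨integrable_rieszKernel_smul μ hp₀ hint, ?_⟩
  rw [integral_rieszKernel_smul μ hp₀, ← hpe, mul_comm]
  exact mul_le_mul_of_nonneg_right hle (by positivity)

end Integral

theorem one_div_sq_add_one_mul_rpow_le_rieszKernel {E : Type*} [NormedAddCommGroup E]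
    (θ : ℝ) {p q : E} (hq : q ≠ p) :
    1 / ((‖p - q‖ ^ 2 + 1) * ‖q‖ ^ θ) ≤ rieszKernel θ 2 p q := by
  have hpq : 0 < ‖p - q‖ := norm_pos_iff.2 (sub_ne_zero.2 hq.symm)
  rw [rieszKernel, Real.rpow_neg hpq.le, Real.rpow_neg (norm_nonneg q), Real.rpow_two, one_div,
    mul_inv]
  gcongr
  linarith

/-- Three-dimensional parameter integral estimate (Lemma A.2, Eq. (A.2)):
for `θ ∈ (1,3)` there is `C > 0` with
`∫_{ℝ³} dq / ((|p-q|² + 1) |q|^θ) ≤ C / |p|^{θ-1}` for all `p ≠ 0`. -/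
theorem integral_three_dim_bound (θ : ℝ) (hθ : θ ∈ Set.Ioo (1 : ℝ) 3) :
    ∃ C > (0 : ℝ), ∀ p : EuclideanSpace ℝ (Fin 3), p ≠ 0 →
      (∫ q : EuclideanSpace ℝ (Fin 3), 1 / ((‖p - q‖ ^ 2 + 1) * ‖q‖ ^ θ))
        ≤ C / ‖p‖ ^ (θ - 1) := by
  obtain ⟨hθ₁, hθ₃⟩ := hθ
  obtain ⟨C, hC⟩ := exists_integral_rieszKernel_le (volume : Measure (EuclideanSpace ℝ (Fin 3)))
    (α := θ) (β := 2) (by linarith) zero_le_two (by simpa using hθ₃) (by norm_num)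
    (by norm_num; linarith)
  refine ⟨max C 1, by positivity, fun p hp => ?_⟩
  obtain ⟨hint, hle⟩ := hC p hp
  calc (∫ q, 1 / ((‖p - q‖ ^ 2 + 1) * ‖q‖ ^ θ))
      ≤ ∫ q, rieszKernel θ 2 p q :=
        integral_mono_of_nonneg (.of_forall fun q => by positivity) hint
          ((Measure.ae_ne volume p).mono fun q => one_div_sq_add_one_mul_rpow_le_rieszKernel θ)
    _ ≤ C * ‖p‖ ^ ((3 : ℝ) - θ - 2) := by simpa using hle
    _ ≤ max C 1 * ‖p‖ ^ ((3 : ℝ) - θ - 2) := by gcongr; exact le_max_left C 1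
    _ = max C 1 / ‖p‖ ^ (θ - 1) := by
        rw [div_eq_mul_inv, ← Real.rpow_neg (norm_nonneg p)]
        ring_nf
end

section
/- Let p ∈ ℝ² and θ ∈ {1,2}. Then there exists a constant C > 0 such that ∫_{ℝ²} 1/(((p-q)² + 1)(q² + 1)^{θ/2}) dq ≤ (C/|p|^θ)(log(1 + |p|) + 1) for all p ≠ 0. -/
/-!
Write `n = ‖p‖` and split the plane into three regions. Where `‖q‖ ≤ n / 2` we have
`‖p - q‖ ≥ n / 2`; where `n / 2 < ‖q‖ ≤ 2 n` we have `(‖q‖² + 1)^(θ/2) ≥ (n / 2)^θ` and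
`‖p - q‖ ≤ 3 n`; where `‖q‖ > 2 n` we have `‖p - q‖ ≥ ‖q‖ / 2`. So the integrand is dominated by
three radial functions, of `q`, `p - q` and `q` respectively, whose integrals in polar coordinates
are `O(n^(-θ) log (1 + n))` (using `r (1 + r) ≤ 2 (n / 2)^(2 - θ) (r² + 1)^(θ/2)` for `r ≤ n / 2`,
valid for `1 ≤ θ ≤ 2`), `O(n^(-θ) log (1 + 3 n))` and `O(n^(-θ))`.
-/

open MeasureTheory Set Real

local notation "E2" => EuclideanSpace ℝ (Fin 2)

noncomputable def nearMajorant (θ n : ℝ) : ℝ → ℝ :=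
  (Iic (n / 2)).indicator fun r => 4 / n ^ 2 / (r ^ 2 + 1) ^ (θ / 2)

noncomputable def midMajorant (θ n : ℝ) : ℝ → ℝ :=
  (Iic (3 * n)).indicator fun r => (2 / n) ^ θ / (r ^ 2 + 1)

noncomputable def farMajorant (θ n : ℝ) : ℝ → ℝ :=
  (Ioi (2 * n)).indicator fun r => 4 * r ^ (-(2 + θ))

theorem nearMajorant_nonneg (θ n r : ℝ) : 0 ≤ nearMajorant θ n r :=
  indicator_nonneg (fun r _ => by positivity) r

theorem midMajorant_nonneg (θ : ℝ) {n : ℝ} (hn : 0 ≤ n) (r : ℝ) : 0 ≤ midMajorant θ n r :=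
  indicator_nonneg (fun r _ => by positivity) r

theorem farMajorant_nonneg (θ : ℝ) {n : ℝ} (hn : 0 ≤ n) (r : ℝ) : 0 ≤ farMajorant θ n r :=
  indicator_nonneg (fun r hr => mul_nonneg (by norm_num)
    (rpow_nonneg (by linarith [mem_Ioi.1 hr]) _)) r

theorem rpow_le_sq_add_one_rpow {θ : ℝ} (hθ : 0 ≤ θ) {b : ℝ} (hb : 0 ≤ b) :
    b ^ θ ≤ (b ^ 2 + 1) ^ (θ / 2) := by
  calc b ^ θ = (b ^ 2) ^ (θ / 2) := by
        rw [← rpow_natCast, ← rpow_mul hb]; ring_nf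
    _ ≤ (b ^ 2 + 1) ^ (θ / 2) := by gcongr; linarith

theorem integrand_le_majorants {E : Type*} [SeminormedAddCommGroup E] {θ : ℝ} (hθ : 0 ≤ θ)
    {p : E} (hp : 0 < ‖p‖) (q : E) :
    1 / ((‖p - q‖ ^ 2 + 1) * (‖q‖ ^ 2 + 1) ^ (θ / 2)) ≤
      nearMajorant θ ‖p‖ ‖q‖ + midMajorant θ ‖p‖ ‖p - q‖ + farMajorant θ ‖p‖ ‖q‖ := by
  have h_near := nearMajorant_nonneg θ ‖p‖ ‖q‖
  have h_mid := midMajorant_nonneg θ hp.le ‖p - q‖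
  have h_far := farMajorant_nonneg θ hp.le ‖q‖
  have h₁ : ‖p‖ - ‖q‖ ≤ ‖p - q‖ := norm_sub_norm_le p q
  have h₂ : ‖q‖ - ‖p‖ ≤ ‖p - q‖ := norm_sub_rev q p ▸ norm_sub_norm_le q p
  have h₃ : ‖p - q‖ ≤ ‖p‖ + ‖q‖ := norm_sub_le p q
  set n := ‖p‖
  set a := ‖p - q‖
  set b := ‖q‖
  have hb : 0 ≤ b := norm_nonneg q
  have hw : b ^ θ ≤ (b ^ 2 + 1) ^ (θ / 2) := rpow_le_sq_add_one_rpow hθ hb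
  have hw_pos : 0 < (b ^ 2 + 1) ^ (θ / 2) := by positivity
  rcases le_or_gt b (n / 2) with hb_near | hb_near
  · have : 1 / (a ^ 2 + 1) ≤ 4 / n ^ 2 := by
      rw [div_le_div_iff₀ (by positivity) (by positivity)]; nlinarith
    have : 1 / ((a ^ 2 + 1) * (b ^ 2 + 1) ^ (θ / 2)) ≤ nearMajorant θ n b := by
      rw [nearMajorant, indicator_of_mem (mem_Iic.2 hb_near), ← div_div]
      gcongr
    linarith
  rcases le_or_gt b (2 * n) with hb_mid | hb_far
  · have : 1 / (b ^ 2 + 1) ^ (θ / 2) ≤ (2 / n) ^ θ := by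
      rw [← inv_div n 2, inv_rpow (by positivity), one_div]
      gcongr
      exact (rpow_le_rpow (by positivity) hb_near.le hθ).trans hw
    have : 1 / ((a ^ 2 + 1) * (b ^ 2 + 1) ^ (θ / 2)) ≤ midMajorant θ n a := by
      rw [midMajorant, indicator_of_mem (mem_Iic.2 (by linarith)), mul_comm, ← div_div]
      gcongr
    linarith
  · have hb_pos : 0 < b := by linarith
    have : 1 / ((a ^ 2 + 1) * (b ^ 2 + 1) ^ (θ / 2)) ≤ farMajorant θ n b := by
      rw [farMajorant, indicator_of_mem (mem_Ioi.2 hb_far), rpow_neg hb,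
        rpow_add hb_pos, rpow_two, ← div_eq_mul_inv,
        div_le_div_iff₀ (by positivity) (by positivity), one_mul]
      have : b ^ 2 ≤ 4 * (a ^ 2 + 1) := by nlinarith
      calc b ^ 2 * b ^ θ ≤ (4 * (a ^ 2 + 1)) * (b ^ 2 + 1) ^ (θ / 2) := by gcongr
        _ = _ := by ring
    linarith

theorem setIntegral_Ioi_mul_indicator_Iic (g : ℝ → ℝ) {T : ℝ} (hT : 0 ≤ T) :
    ∫ r in Ioi 0, r * (Iic T).indicator g r = ∫ r in 0..T, r * g r := by
  have : (fun r => r * (Iic T).indicator g r) = (Iic T).indicator fun r => r * g r :=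
    funext fun r => (indicator_mul_right _ (fun r => r) g).symm
  rw [this, setIntegral_indicator measurableSet_Iic, Ioi_inter_Iic,
    intervalIntegral.integral_of_le hT]

theorem intervalIntegral_le_mul_log {f : ℝ → ℝ} {K T : ℝ} (hT : 0 ≤ T)
    (hf : IntervalIntegrable f volume 0 T) (hle : ∀ r ∈ Icc 0 T, f r ≤ K / (1 + r)) :
    ∫ r in 0..T, f r ≤ K * log (1 + T) := by
  have h_cont : ContinuousOn (fun r : ℝ => K / (1 + r)) (uIcc 0 T) := by
    rw [uIcc_of_le hT]
    exact continuousOn_const.div (by fun_prop) fun r hr => by linarith [hr.1]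
  calc ∫ r in 0..T, f r ≤ ∫ r in 0..T, K / (1 + r) :=
        intervalIntegral.integral_mono_on hT hf h_cont.intervalIntegrable hle
    _ = K * log (1 + T) := by
        simp_rw [div_eq_mul_inv]
        rw [intervalIntegral.integral_const_mul,
          intervalIntegral.integral_comp_add_left (fun r => r⁻¹) 1,
          integral_inv_of_pos (by norm_num) (by linarith)]
        simp

theorem mul_one_add_le_rpow_mul_rpow {θ r R : ℝ} (hθ₁ : 1 ≤ θ) (hθ₂ : θ ≤ 2)
    (hr : 0 ≤ r) (hrR : r ≤ R) :
    r * (1 + r) ≤ 2 * R ^ (2 - θ) * (r ^ 2 + 1) ^ (θ / 2) := by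
  have hR := rpow_nonneg (hr.trans hrR) (2 - θ)
  have h_split : r = r ^ (2 - θ) * r ^ (θ - 1) := by
    rw [← rpow_add' hr (by norm_num)]; norm_num
  have h_sq : (1 + r) ^ θ ≤ 2 * (r ^ 2 + 1) ^ (θ / 2) :=
    calc (1 + r) ^ θ = ((1 + r) ^ 2) ^ (θ / 2) := by
          rw [← rpow_natCast, ← rpow_mul (by positivity)]; ring_nf
      _ ≤ (2 * (r ^ 2 + 1)) ^ (θ / 2) := by gcongr; nlinarith [sq_nonneg (r - 1)]
      _ = 2 ^ (θ / 2) * (r ^ 2 + 1) ^ (θ / 2) := mul_rpow (by norm_num) (by positivity)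
      _ ≤ 2 ^ (1 : ℝ) * (r ^ 2 + 1) ^ (θ / 2) := by
          gcongr
          · norm_num
          · linarith
      _ = 2 * (r ^ 2 + 1) ^ (θ / 2) := by rw [rpow_one]
  calc r * (1 + r) = r ^ (2 - θ) * r ^ (θ - 1) * (1 + r) := by rw [← h_split]
    _ ≤ R ^ (2 - θ) * (1 + r) ^ (θ - 1) * (1 + r) := by
        gcongr
        linarith
    _ = R ^ (2 - θ) * (1 + r) ^ θ := by
        rw [mul_assoc, ← rpow_add_one (by positivity)]; ring_nf
    _ ≤ 2 * R ^ (2 - θ) * (r ^ 2 + 1) ^ (θ / 2) := by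
        rw [mul_assoc, mul_left_comm]; gcongr

theorem integral_mul_nearMajorant_le {θ n : ℝ} (hθ₁ : 1 ≤ θ) (hθ₂ : θ ≤ 2) (hn : 0 < n) :
    ∫ r in Ioi 0, r * nearMajorant θ n r ≤ 8 / n ^ θ * log (1 + n) := by
  have h_bound : ∀ r ∈ Icc 0 (n / 2),
      r * (4 / n ^ 2 / (r ^ 2 + 1) ^ (θ / 2)) ≤ 8 * (n / 2) ^ (2 - θ) / n ^ 2 / (1 + r) := by
    intro r hr
    have h : r / (r ^ 2 + 1) ^ (θ / 2) ≤ 2 * (n / 2) ^ (2 - θ) / (1 + r) := by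
      rw [div_le_div_iff₀ (by positivity) (by linarith [hr.1])]
      exact mul_one_add_le_rpow_mul_rpow hθ₁ hθ₂ hr.1 hr.2
    calc r * (4 / n ^ 2 / (r ^ 2 + 1) ^ (θ / 2)) = 4 / n ^ 2 * (r / (r ^ 2 + 1) ^ (θ / 2)) := by
          ring
      _ ≤ 4 / n ^ 2 * (2 * (n / 2) ^ (2 - θ) / (1 + r)) := by gcongr
      _ = 8 * (n / 2) ^ (2 - θ) / n ^ 2 / (1 + r) := by ring
  have h_coeff : 8 * (n / 2) ^ (2 - θ) / n ^ 2 ≤ 8 / n ^ θ := by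
    calc 8 * (n / 2) ^ (2 - θ) / n ^ 2 ≤ 8 * n ^ (2 - θ) / n ^ 2 := by
          gcongr
          linarith
      _ = 8 / n ^ θ := by
          rw [rpow_sub hn, rpow_two]; field_simp
  rw [nearMajorant, setIntegral_Ioi_mul_indicator_Iic _ (by positivity)]
  calc _ ≤ 8 * (n / 2) ^ (2 - θ) / n ^ 2 * log (1 + n / 2) :=
        intervalIntegral_le_mul_log (by positivity)
          (Continuous.intervalIntegrable (continuous_id.mul (continuous_const.div
            (.rpow_const (by fun_prop) fun r => .inl (by positivity)) fun r => by positivity)) _ _)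
          h_bound
    _ ≤ 8 / n ^ θ * log (1 + n) := by
        gcongr
        · exact log_nonneg (by linarith)
        · linarith

theorem integral_mul_midMajorant_le {θ n : ℝ} (hθ₂ : θ ≤ 2) (hn : 0 < n) :
    ∫ r in Ioi 0, r * midMajorant θ n r ≤ 16 / n ^ θ * (log (1 + n) + 1) := by
  have h_bound : ∀ r ∈ Icc 0 (3 * n),
      r * ((2 / n) ^ θ / (r ^ 2 + 1)) ≤ 2 * (2 / n) ^ θ / (1 + r) := by
    intro r hr
    rw [mul_div_assoc', div_le_div_iff₀ (by positivity) (by linarith [hr.1])]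
    nlinarith [mul_le_mul_of_nonneg_left (by nlinarith [sq_nonneg (r - 1)] :
      r * (1 + r) ≤ 2 * (r ^ 2 + 1)) (by positivity : 0 ≤ (2 / n) ^ θ)]
  have h_coeff : (2 / n) ^ θ ≤ 4 / n ^ θ := by
    rw [div_rpow (by norm_num) hn.le]
    gcongr
    calc (2 : ℝ) ^ θ ≤ 2 ^ (2 : ℝ) := rpow_le_rpow_of_exponent_le (by norm_num) hθ₂
      _ = 4 := by norm_num
  have h_log : log (1 + 3 * n) ≤ 2 + log (1 + n) := by
    calc log (1 + 3 * n) ≤ log (3 * (1 + n)) := log_le_log (by positivity) (by linarith)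
      _ = log 3 + log (1 + n) := log_mul (by norm_num) (by positivity)
      _ ≤ 2 + log (1 + n) := by linarith [log_le_sub_one_of_pos (by norm_num : (0 : ℝ) < 3)]
  have h_log_nonneg : 0 ≤ log (1 + n) := log_nonneg (by linarith)
  have h_log_nonneg' : 0 ≤ log (1 + 3 * n) := log_nonneg (by linarith)
  rw [midMajorant, setIntegral_Ioi_mul_indicator_Iic _ (by positivity)]
  calc _ ≤ 2 * (2 / n) ^ θ * log (1 + 3 * n) :=
        intervalIntegral_le_mul_log (by positivity)
          (Continuous.intervalIntegrable (continuous_id.mul (continuous_const.div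
            (by fun_prop) fun r => by positivity)) _ _)
          h_bound
    _ ≤ 2 * (4 / n ^ θ) * (2 + log (1 + n)) := by gcongr
    _ ≤ 16 / n ^ θ * (log (1 + n) + 1) := by
        have : 0 < 1 / n ^ θ := by positivity
        rw [div_eq_mul_one_div 4, div_eq_mul_one_div 16]
        nlinarith

theorem mul_farMajorant {θ n : ℝ} (hn : 0 ≤ n) :
    (fun r => r * farMajorant θ n r) = (Ioi (2 * n)).indicator fun r => 4 * r ^ (-(1 + θ)) := by
  ext r
  by_cases hr : r ∈ Ioi (2 * n)
  · have hr_pos : 0 < r := by rw [mem_Ioi] at hr; linarith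
    rw [farMajorant, indicator_of_mem hr, indicator_of_mem hr,
      show -(1 + θ) = 1 + -(2 + θ) by ring, rpow_add hr_pos, rpow_one]
    ring
  · rw [farMajorant, indicator_of_notMem hr, indicator_of_notMem hr, mul_zero]

theorem integral_mul_farMajorant_le {θ n : ℝ} (hθ : 1 ≤ θ) (hn : 0 < n) :
    ∫ r in Ioi 0, r * farMajorant θ n r ≤ 4 / n ^ θ := by
  rw [mul_farMajorant hn.le, setIntegral_indicator measurableSet_Ioi, Ioi_inter_Ioi,
    sup_of_le_right (by positivity), integral_const_mul,
    integral_Ioi_rpow_of_lt (by linarith) (by positivity),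
    show -(1 + θ) + 1 = -θ by ring, neg_div_neg_eq, rpow_neg (by positivity), div_eq_mul_inv 4]
  gcongr
  calc ((2 * n) ^ θ)⁻¹ / θ ≤ ((2 * n) ^ θ)⁻¹ := div_le_self (by positivity) hθ
    _ ≤ (n ^ θ)⁻¹ := by gcongr; linarith

theorem integral_norm_eq_two_pi_mul (g : ℝ → ℝ) :
    ∫ q : E2, g ‖q‖ = 2 * π * ∫ r in Ioi (0 : ℝ), r * g r := by
  rw [integral_fun_norm_addHaar volume g, finrank_euclideanSpace_fin, measureReal_def,
    EuclideanSpace.volume_ball_fin_two]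
  simp [smul_eq_mul, pi_pos.le]
  ring

theorem integrable_comp_norm_iff {g : ℝ → ℝ} :
    Integrable (fun q : E2 => g ‖q‖) ↔ IntegrableOn (fun r => r * g r) (Ioi 0) := by
  rw [integrable_fun_norm_addHaar volume, finrank_euclideanSpace_fin]
  simp [smul_eq_mul]

theorem integrable_indicator_Iic_norm {E : Type*} [NormedAddCommGroup E] [NormedSpace ℝ E]
    [FiniteDimensional ℝ E] [MeasurableSpace E] [BorelSpace E] (μ : Measure E)
    [IsFiniteMeasureOnCompacts μ] {g : ℝ → ℝ} (hg : Continuous g) (T : ℝ) :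
    Integrable (fun x => (Iic T).indicator g ‖x‖) μ := by
  have : (fun x : E => (Iic T).indicator g ‖x‖) =
      (Metric.closedBall 0 T).indicator fun x => g ‖x‖ := by
    ext x; simp [indicator]
  rw [this]
  exact ((hg.comp continuous_norm).continuousOn.integrableOn_compact
    (isCompact_closedBall 0 T)).integrable_indicator Metric.isClosed_closedBall.measurableSet

theorem integrable_farMajorant_norm {θ n : ℝ} (hθ : 0 < θ) (hn : 0 < n) :
    Integrable fun q : E2 => farMajorant θ n ‖q‖ := by
  rw [integrable_comp_norm_iff, mul_farMajorant hn.le]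
  exact (IntegrableOn.integrable_indicator
    ((integrableOn_Ioi_rpow_of_lt (a := -(1 + θ)) (by linarith) (by positivity)).const_mul 4)
    measurableSet_Ioi).integrableOn

theorem integral_two_dim_le {θ : ℝ} (hθ₁ : 1 ≤ θ) (hθ₂ : θ ≤ 2) {p : E2} (hp : p ≠ 0) :
    ∫ q : E2, 1 / ((‖p - q‖ ^ 2 + 1) * (‖q‖ ^ 2 + 1) ^ (θ / 2)) ≤
      56 * π / ‖p‖ ^ θ * (log (1 + ‖p‖) + 1) := by
  have hn : 0 < ‖p‖ := norm_pos_iff.2 hp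
  have h_near : Integrable fun q : E2 => nearMajorant θ ‖p‖ ‖q‖ :=
    integrable_indicator_Iic_norm volume (continuous_const.div
      (.rpow_const (by fun_prop) fun r => .inl (by positivity)) fun r => by positivity) _
  have h_mid : Integrable fun q : E2 => midMajorant θ ‖p‖ ‖q‖ :=
    integrable_indicator_Iic_norm volume (continuous_const.div (by fun_prop)
      fun r => by positivity) _
  have h_near_mid : Integrable fun q : E2 => nearMajorant θ ‖p‖ ‖q‖ + midMajorant θ ‖p‖ ‖p - q‖ :=
    h_near.add (h_mid.comp_sub_left p)
  have h_far := integrable_farMajorant_norm (θ := θ) (by linarith) hn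
  have h_log : 0 ≤ log (1 + ‖p‖) := log_nonneg (by linarith)
  calc ∫ q : E2, 1 / ((‖p - q‖ ^ 2 + 1) * (‖q‖ ^ 2 + 1) ^ (θ / 2))
      ≤ ∫ q : E2, (nearMajorant θ ‖p‖ ‖q‖ + midMajorant θ ‖p‖ ‖p - q‖ + farMajorant θ ‖p‖ ‖q‖) :=
        integral_mono_of_nonneg (ae_of_all _ fun q => by positivity)
          (h_near_mid.add h_far) (ae_of_all _ (integrand_le_majorants (by linarith) hn))
    _ = 2 * π * ((∫ r in Ioi 0, r * nearMajorant θ ‖p‖ r) +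
          (∫ r in Ioi 0, r * midMajorant θ ‖p‖ r) + ∫ r in Ioi 0, r * farMajorant θ ‖p‖ r) := by
        rw [integral_add h_near_mid h_far,
          integral_add h_near (h_mid.comp_sub_left p),
          integral_sub_left_eq_self (fun q : E2 => midMajorant θ ‖p‖ ‖q‖) volume p,
          integral_norm_eq_two_pi_mul, integral_norm_eq_two_pi_mul, integral_norm_eq_two_pi_mul]
        ring
    _ ≤ 2 * π * (8 / ‖p‖ ^ θ * log (1 + ‖p‖) + 16 / ‖p‖ ^ θ * (log (1 + ‖p‖) + 1) +
          4 / ‖p‖ ^ θ) := by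
        gcongr
        · exact integral_mul_nearMajorant_le hθ₁ hθ₂ hn
        · exact integral_mul_midMajorant_le hθ₂ hn
        · exact integral_mul_farMajorant_le hθ₁ hn
    _ ≤ 56 * π / ‖p‖ ^ θ * (log (1 + ‖p‖) + 1) := by
        have h_scale : 0 < π * (1 / ‖p‖ ^ θ) := by positivity
        rw [div_eq_mul_one_div 8, div_eq_mul_one_div 16, div_eq_mul_one_div 4,
          div_eq_mul_one_div (56 * π)]
        nlinarith [mul_nonneg h_scale.le h_log]

/-- Two-dimensional parameter integral estimate (Lemma A.2, Eq. (A.3)):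
for `θ ∈ {1,2}` there is `C > 0` with
`∫_{ℝ²} dq / ((|p-q|² + 1)(|q|² + 1)^{θ/2}) ≤ (C/|p|^θ)(log(1+|p|)+1)` for all `p ≠ 0`. -/
theorem integral_two_dim_bound (θ : ℝ) (hθ : θ ∈ ({1, 2} : Set ℝ)) :
    ∃ C > (0 : ℝ), ∀ p : EuclideanSpace ℝ (Fin 2), p ≠ 0 →
      (∫ q : EuclideanSpace ℝ (Fin 2), 1 / ((‖p - q‖ ^ 2 + 1) * (‖q‖ ^ 2 + 1) ^ (θ / 2)))
        ≤ C / ‖p‖ ^ θ * (Real.log (1 + ‖p‖) + 1) := by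
  obtain ⟨hθ₁, hθ₂⟩ : 1 ≤ θ ∧ θ ≤ 2 := by rcases hθ with rfl | rfl <;> norm_num
  exact ⟨56 * π, by positivity, fun p hp => integral_two_dim_le hθ₁ hθ₂ hp⟩
end

section
/- Let d ≥ 1, α ≥ 0, and η be reals with 4(1-η) + 2α - d > 0 and 2α < d. Then there is a constant C > 0 such that for all p ∈ ℝ^d and all m ≥ 1, ∫_{ℝ^d} |q|^{-2α} / ((p - q)² + m)^{2(1-η)} dq ≤ C m^{-2(1-η) - α + d/2}. -/
/-!
Since `‖q‖ ≤ ‖p - q‖` or `‖p - q‖ ≤ ‖q‖`, the integrand is at most `K q + K (p - q)` with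
`K x = ‖x‖ ^ (-2α) / (‖x‖ ^ 2 + m) ^ (2(1-η))`, which removes the dependence on `p` (this replaces
the Hardy–Littlewood rearrangement inequality). The substitution `x = √m • y` gives
`∫ K = m ^ (d/2 - α - 2(1-η)) * ∫ K₁`, where `K₁` is `K` at `m = 1`, and `∫ K₁` is finite by
polar coordinates: its radial density behaves like `r ^ (d-1-2α)` at `0` and like
`r ^ (d-1-2α-4(1-η))` at infinity.
-/

open MeasureTheory Set Module

theorem rpow_neg_div_sq_add_le_add {a b s t m : ℝ} (ha : 0 ≤ a) (hb : 0 < b) (hs : 0 ≤ s)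
    (ht : 0 ≤ t) (hm : 0 < m) :
    a ^ (-s) / (b ^ 2 + m) ^ t ≤ a ^ (-s) / (a ^ 2 + m) ^ t + b ^ (-s) / (b ^ 2 + m) ^ t := by
  rcases le_total a b with hab | hba
  · have : a ^ (-s) / (b ^ 2 + m) ^ t ≤ a ^ (-s) / (a ^ 2 + m) ^ t := by gcongr
    linarith [show 0 ≤ b ^ (-s) / (b ^ 2 + m) ^ t by positivity]
  · have : a ^ (-s) ≤ b ^ (-s) := Real.rpow_le_rpow_of_nonpos hb hba (by linarith)
    have : a ^ (-s) / (b ^ 2 + m) ^ t ≤ b ^ (-s) / (b ^ 2 + m) ^ t := by gcongr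
    linarith [show 0 ≤ a ^ (-s) / (a ^ 2 + m) ^ t by positivity]

theorem integrableOn_Ioi_rpow_div_sq_add_one_rpow {a t : ℝ} (ha : -1 < a)
    (hat : a - 2 * t < -1) :
    IntegrableOn (fun y : ℝ ↦ y ^ a / (y ^ 2 + 1) ^ t) (Ioi 0) := by
  have ht : 0 ≤ t := by linarith
  have hmeas : AEStronglyMeasurable (fun y : ℝ ↦ y ^ a / (y ^ 2 + 1) ^ t) :=
    (by fun_prop : Measurable _).aestronglyMeasurable
  have hnonneg : ∀ y : ℝ, 0 < y → 0 ≤ y ^ a / (y ^ 2 + 1) ^ t := fun y hy ↦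
    div_nonneg (Real.rpow_nonneg hy.le a) (by positivity)
  refine (IntegrableOn.union ?_ ?_).mono_set (Ioi_subset_Ioc_union_Ioi (b := 1))
  · refine ((intervalIntegrable_iff_integrableOn_Ioc_of_le zero_le_one).mp
      (intervalIntegral.intervalIntegrable_rpow' ha)).mono' hmeas.restrict ?_
    filter_upwards [ae_restrict_mem measurableSet_Ioc] with y hy
    rw [Real.norm_of_nonneg (hnonneg y hy.1)]
    exact div_le_self (Real.rpow_nonneg hy.1.le a)
      (Real.one_le_rpow (le_add_of_nonneg_left (sq_nonneg y)) ht)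
  · refine (integrableOn_Ioi_rpow_of_lt hat one_pos).mono' hmeas.restrict ?_
    filter_upwards [ae_restrict_mem measurableSet_Ioi] with y (hy : 1 < y)
    have hy0 : 0 < y := one_pos.trans hy
    rw [Real.norm_of_nonneg (hnonneg y hy0), Real.rpow_sub hy0, Real.rpow_mul hy0.le,
      Real.rpow_two]
    gcongr
    linarith

variable {E : Type*} [NormedAddCommGroup E] [NormedSpace ℝ E]

noncomputable def powerKernel (s t m : ℝ) (x : E) : ℝ := ‖x‖ ^ (-s) / (‖x‖ ^ 2 + m) ^ t

theorem powerKernel_sqrt_smul {s t m : ℝ} (hm : 0 < m) (x : E) :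
    powerKernel s t m (√m • x) = m ^ (-(s / 2) - t) * powerKernel s t 1 x := by
  have hnorm : ‖√m • x‖ = √m * ‖x‖ := by
    rw [norm_smul, Real.norm_of_nonneg (Real.sqrt_nonneg m)]
  have hnum : ‖√m • x‖ ^ (-s) = m ^ (-(s / 2)) * ‖x‖ ^ (-s) := by
    rw [hnorm, Real.mul_rpow (Real.sqrt_nonneg m) (norm_nonneg x), Real.sqrt_eq_rpow,
      ← Real.rpow_mul hm.le]
    ring_nf
  have hden : (‖√m • x‖ ^ 2 + m) ^ t = m ^ t * (‖x‖ ^ 2 + 1) ^ t := by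
    rw [hnorm, mul_pow, Real.sq_sqrt hm.le, ← Real.mul_rpow hm.le (by positivity)]
    ring_nf
  rw [powerKernel, powerKernel, hnum, hden, mul_div_mul_comm, Real.rpow_sub hm]

theorem powerKernel_eq_mul_powerKernel_one {s t m : ℝ} (hm : 0 < m) (x : E) :
    powerKernel s t m x = m ^ (-(s / 2) - t) * powerKernel s t 1 ((√m)⁻¹ • x) := by
  rw [← powerKernel_sqrt_smul hm, smul_inv_smul₀ (Real.sqrt_pos.2 hm).ne']

variable [MeasurableSpace E] [BorelSpace E] [FiniteDimensional ℝ E]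
  (μ : Measure E) [μ.IsAddHaarMeasure]

theorem integrable_powerKernel_one [Nontrivial E] {s t : ℝ} (hs : s < finrank ℝ E)
    (hst : finrank ℝ E < s + 2 * t) : Integrable (powerKernel s t 1) μ := by
  refine (integrable_fun_norm_addHaar μ (f := fun y ↦ y ^ (-s) / (y ^ 2 + 1) ^ t)).2 ?_
  refine (integrableOn_Ioi_rpow_div_sq_add_one_rpow (a := finrank ℝ E - 1 - s)
    (by linarith) (by linarith)).congr_fun (fun y (hy : 0 < y) ↦ ?_) measurableSet_Ioi
  rw [smul_eq_mul, ← mul_div_assoc, ← Real.rpow_natCast, Nat.cast_sub finrank_pos,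
    ← Real.rpow_add hy]
  ring_nf

theorem integrable_powerKernel [Nontrivial E] {s t m : ℝ} (hs : s < finrank ℝ E)
    (hst : finrank ℝ E < s + 2 * t) (hm : 0 < m) : Integrable (powerKernel s t m) μ := by
  rw [funext (powerKernel_eq_mul_powerKernel_one hm)]
  exact ((integrable_powerKernel_one μ hs hst).comp_smul
    (inv_ne_zero (Real.sqrt_pos.2 hm).ne')).const_mul _

theorem integral_powerKernel {s t m : ℝ} (hm : 0 < m) :
    ∫ x, powerKernel s t m x ∂μ =
      m ^ ((finrank ℝ E : ℝ) / 2 - s / 2 - t) * ∫ x, powerKernel s t 1 x ∂μ := by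
  simp_rw [powerKernel_eq_mul_powerKernel_one hm]
  rw [integral_const_mul, Measure.integral_comp_inv_smul_of_nonneg μ _ (Real.sqrt_nonneg m),
    smul_eq_mul, ← mul_assoc, Real.sqrt_eq_rpow, ← Real.rpow_mul_natCast hm.le,
    ← Real.rpow_add hm]
  ring_nf

/-- Key integral bound (Eq. (G int bound)) of Proposition 3.1: for
`4(1-η) + 2α - d > 0` and `2α < d`, there is `C > 0` with
`∫ |q|^{-2α}/((p-q)² + m)^{2(1-η)} dq ≤ C m^{-2(1-η) - α + d/2}`
for all `p ∈ ℝᵈ` and `m ≥ 1`. -/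
theorem integral_G_bound (d : ℕ) (hd : 1 ≤ d) (α η : ℝ) (hα : 0 ≤ α)
    (hexp : 0 < 4 * (1 - η) + 2 * α - d) (hαd : 2 * α < d) :
    ∃ C > (0 : ℝ), ∀ p : EuclideanSpace ℝ (Fin d), ∀ m : ℝ, 1 ≤ m →
      (∫ q : EuclideanSpace ℝ (Fin d),
          ‖q‖ ^ (-(2 * α)) / (‖p - q‖ ^ 2 + m) ^ (2 * (1 - η)))
        ≤ C * m ^ (-(2 * (1 - η)) - α + (d : ℝ) / 2) := by
  have : Nonempty (Fin d) := Fin.pos_iff_nonempty.mp hd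
  have hdim : (finrank ℝ (EuclideanSpace ℝ (Fin d)) : ℝ) = d := by simp
  set K := powerKernel (E := EuclideanSpace ℝ (Fin d)) (2 * α) (2 * (1 - η))
  have hI : 0 ≤ ∫ x, K 1 x := integral_nonneg fun x ↦ by simp only [K, powerKernel]; positivity
  refine ⟨2 * (∫ x, K 1 x) + 1, by positivity, fun p m hm ↦ ?_⟩
  have hm0 : 0 < m := by linarith
  have hK : Integrable (K m) :=
    integrable_powerKernel volume (by rw [hdim]; linarith) (by rw [hdim]; linarith) hm0
  have hbound : ∀ᵐ q ∂volume,
      ‖q‖ ^ (-(2 * α)) / (‖p - q‖ ^ 2 + m) ^ (2 * (1 - η)) ≤ K m q + K m (p - q) := by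
    filter_upwards [volume.ae_ne p] with q hq
    exact rpow_neg_div_sq_add_le_add (norm_nonneg q) (norm_pos_iff.2 (sub_ne_zero.2 hq.symm))
      (by positivity) (by linarith) hm0
  calc (∫ q, ‖q‖ ^ (-(2 * α)) / (‖p - q‖ ^ 2 + m) ^ (2 * (1 - η)))
      ≤ ∫ q, (K m q + K m (p - q)) :=
        integral_mono_of_nonneg
          (.of_forall fun q ↦ div_nonneg (by positivity) (Real.rpow_nonneg (by positivity) _))
          (hK.add (hK.comp_sub_left p)) hbound
    _ = 2 * ∫ q, K m q := by
        rw [integral_add hK (hK.comp_sub_left p), integral_sub_left_eq_self]; ring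
    _ = 2 * (∫ x, K 1 x) * m ^ (-(2 * (1 - η)) - α + (d : ℝ) / 2) := by
        rw [integral_powerKernel volume hm0, hdim,
          show (d : ℝ) / 2 - 2 * α / 2 - 2 * (1 - η) = -(2 * (1 - η)) - α + d / 2 by ring]
        ring
    _ ≤ (2 * (∫ x, K 1 x) + 1) * m ^ (-(2 * (1 - η)) - α + (d : ℝ) / 2) :=
        mul_le_mul_of_nonneg_right (by linarith) (Real.rpow_nonneg hm0.le _)
end
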